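/- arXiv:2311.11573 — 2 statements merged into one kernel-verified Lean document; each statement's English description precedes it below -/
import Mathlib

section
/- For all ν>0, S>0, and 0<κ<1, the quantity τ₋₊ := -λ₋ + μ₊ - 1/(ν²Sκ) is positive, where λ₋ = -1/(2ν²S) - sqrt(1/(2ν²S)² + 1/ν²) and μ₊ = (1-κ)/(2ν²Sκ) + sqrt(((1-κ)/(2ν²Sκ))² + 1/ν²). -/
theorem tau_mp_pos_general (ν S κ : ℝ) (hν : 0 < ν) (hS : 0 < S) (hκ0 : 0 < κ) :
    0 < -(-1/(2*ν^2*S) - Real.sqrt ((1/(2*ν^2*S))^2 + 1/ν^2))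
      + ((1-κ)/(2*ν^2*S*κ) + Real.sqrt (((1-κ)/(2*ν^2*S*κ))^2 + 1/ν^2))
      - 1/(ν^2*S*κ) := by
  have hc : 0 < 1/ν^2 := by positivity
  have ha := Real.lt_sqrt_of_sq_lt (lt_add_of_pos_right ((1/(2*ν^2*S))^2) hc)
  have hb := Real.lt_sqrt_of_sq_lt (lt_add_of_pos_right (((1-κ)/(2*ν^2*S*κ))^2) hc)
  -- With `a = 1/(2ν²S)`, `b = (1-κ)/(2ν²Sκ)` and `c = 1/ν²` we have `1/(ν²Sκ) = 2a + 2b`,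
  -- so the quantity is `(√(a² + c) - a) + (√(b² + c) - b)`, a sum of two positive terms.
  have hsplit : 1/(ν^2*S*κ) = 2*(1/(2*ν^2*S)) + 2*((1-κ)/(2*ν^2*S*κ)) := by
    field_simp
    ring
  have hneg : -1/(2*ν^2*S) = -(1/(2*ν^2*S)) := neg_div _ _
  linarith

theorem tau_mp_pos (ν S κ : ℝ) (hν : 0 < ν) (hS : 0 < S) (hκ0 : 0 < κ) (hκ1 : κ < 1) :
    0 < -(-1/(2*ν^2*S) - Real.sqrt ((1/(2*ν^2*S))^2 + 1/ν^2))
      + ((1-κ)/(2*ν^2*S*κ) + Real.sqrt (((1-κ)/(2*ν^2*S*κ))^2 + 1/ν^2))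
      - 1/(ν^2*S*κ) :=
  tau_mp_pos_general ν S κ hν hS hκ0
end

section
/- For all ν>0, S>0, and 0<κ<1, the quantity τ₊₊ := -λ₊ + μ₊ - 1/(ν²Sκ) is negative, where λ₊ = -1/(2ν²S) + sqrt(1/(2ν²S)² + 1/ν²) and μ₊ = (1-κ)/(2ν²Sκ) + sqrt(((1-κ)/(2ν²Sκ))² + 1/ν²). -/
/-!
With `a = 1/(2ν²S)`, `b = (1-κ)/(2ν²Sκ)` and `c = 1/ν²` one has `1/(ν²Sκ) = 2(a + b)`, so
`τ₊₊ = √(b² + c) - √(a² + c) - a - b`. Squaring, `√(b² + c) < √(a² + c) + (a + b)` reduces to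
`0 < 2(a + b)(a + √(a² + c))`, which holds as soon as `a > 0` and `a + b > 0`.
-/

theorem Real.sqrt_sq_add_lt_sqrt_sq_add_add {a b c : ℝ} (hc : 0 ≤ c) (ha : 0 < a)
    (hab : 0 < a + b) : √(b ^ 2 + c) < √(a ^ 2 + c) + a + b := by
  have hsq : √(a ^ 2 + c) ^ 2 = a ^ 2 + c := Real.sq_sqrt (by positivity)
  have hpos : 0 < √(a ^ 2 + c) + a + b := by linarith [Real.sqrt_nonneg (a ^ 2 + c)]
  rw [Real.sqrt_lt' hpos]
  nlinarith [Real.sqrt_nonneg (a ^ 2 + c)]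

theorem tau_pp_neg_general (ν S κ : ℝ) (hν : 0 < ν) (hS : 0 < S) (hκ0 : 0 < κ) :
    -(-1/(2*ν^2*S) + Real.sqrt ((1/(2*ν^2*S))^2 + 1/ν^2))
      + ((1-κ)/(2*ν^2*S*κ) + Real.sqrt (((1-κ)/(2*ν^2*S*κ))^2 + 1/ν^2))
      - 1/(ν^2*S*κ) < 0 := by
  have hsum : 1/(2*ν^2*S) + (1-κ)/(2*ν^2*S*κ) = 1/(2*ν^2*S*κ) := by field_simp; ring
  set a : ℝ := 1/(2*ν^2*S)
  set b : ℝ := (1-κ)/(2*ν^2*S*κ)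
  have ha : 0 < a := by positivity
  have hab : 0 < a + b := by rw [hsum]; positivity
  have hrate : 1/(ν^2*S*κ) = 2 * (a + b) := by rw [hsum]; field_simp
  have hneg : -1/(2*ν^2*S) = -a := by ring
  have hsqrt := Real.sqrt_sq_add_lt_sqrt_sq_add_add (by positivity : (0:ℝ) ≤ 1/ν^2) ha hab
  rw [hrate, hneg]
  linarith

theorem tau_pp_neg (ν S κ : ℝ) (hν : 0 < ν) (hS : 0 < S) (hκ0 : 0 < κ) (hκ1 : κ < 1) :
    -(-1/(2*ν^2*S) + Real.sqrt ((1/(2*ν^2*S))^2 + 1/ν^2))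
      + ((1-κ)/(2*ν^2*S*κ) + Real.sqrt (((1-κ)/(2*ν^2*S*κ))^2 + 1/ν^2))
      - 1/(ν^2*S*κ) < 0 :=
  tau_pp_neg_general ν S κ hν hS hκ0
end
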